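/- arXiv:1607.03430 — 2 statements merged into one kernel-verified Lean document; each statement's English description precedes it below -/
import Mathlib

section
/- Conjugate function of the Eisenberg–Noe aggregation function: for every z ∈ ℝ^d_+, sup_{x ∈ ℝ^d} ( Λ(x) − zᵀx ) = Σ_{i=1}^d ( c_i(z) )⁺, where c_i(z) = Σ_{j=0}^d ℓ_{ij}( z_j − z_i ) with the convention z₀ := 1, and r⁺ := max{r,0}. -/
open scoped ENNReal

noncomputable section

namespace EisenbergNoe

/-- Total liability `p̄ᵢ = ∑_{j=0}^d ℓ_{ij}` of institution `i` (institutions are the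
nodes `1,…,d`, encoded as `i.succ` for `i : Fin d`; node `0` is society). -/
def pbar {d : ℕ} (ℓ : Fin (d + 1) → Fin (d + 1) → ℝ) (i : Fin d) : ℝ :=
  ∑ j, ℓ i.succ j

/-- Relative liability `a_{ij} = ℓ_{ij} / p̄ᵢ` of institution `i` to node `j`. -/
def rel {d : ℕ} (ℓ : Fin (d + 1) → Fin (d + 1) → ℝ) (i : Fin d) (j : Fin (d + 1)) : ℝ :=
  ℓ i.succ j / pbar ℓ i

/-- Feasibility for the Eisenberg–Noe linear program `P(x)`:
`pᵢ ≤ xᵢ + ∑_{j=1}^d a_{ji} pⱼ` and `0 ≤ pᵢ ≤ p̄ᵢ` for all `i`. -/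
def Feasible {d : ℕ} (ℓ : Fin (d + 1) → Fin (d + 1) → ℝ) (x p : Fin d → ℝ) : Prop :=
  (∀ i, p i ≤ x i + ∑ j, rel ℓ j i.succ * p j) ∧ ∀ i, 0 ≤ p i ∧ p i ≤ pbar ℓ i

/-- The objective `∑_{i=1}^d a_{i0} pᵢ` of `P(x)` (the equity of society). -/
def obj {d : ℕ} (ℓ : Fin (d + 1) → Fin (d + 1) → ℝ) (p : Fin d → ℝ) : ℝ :=
  ∑ i, rel ℓ i 0 * p i

/-!
Write `uᵢ(z) = ∑ⱼ aᵢⱼ (zⱼ - zᵢ)` (with `z₀ = 1`) for the value, in the prices `(1, z)`, of one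
unit paid by institution `i`; then `cᵢ(z) = p̄ᵢ uᵢ(z)`. Exchanging the order of summation gives
`∑ᵢ aᵢ₀ pᵢ - ∑ᵢ zᵢ (pᵢ - ∑ⱼ aⱼᵢ pⱼ) = ∑ᵢ pᵢ uᵢ(z)` for every `p`. As `z ≥ 0`, the budget
constraint gives `zᵀx ≥ ∑ᵢ zᵢ (pᵢ - ∑ⱼ aⱼᵢ pⱼ)`, so for feasible `(x, p)` the value is at most
`∑ᵢ pᵢ uᵢ(z) ≤ ∑ᵢ (p̄ᵢ uᵢ(z))⁺`. Equality holds when `pᵢ = p̄ᵢ` exactly if `uᵢ(z) ≥ 0`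
(else `pᵢ = 0`) and `x` is the smallest budget allowing these payments.
-/

theorem mul_le_max_mul_zero {t b r : ℝ} (ht : 0 ≤ t) (htb : t ≤ b) : t * r ≤ max (b * r) 0 := by
  rcases le_total 0 r with hr | hr
  · exact le_max_of_le_left (mul_le_mul_of_nonneg_right htb hr)
  · exact le_max_of_le_right (mul_nonpos_of_nonneg_of_nonpos ht hr)

theorem ite_nonneg_mul_eq_max_mul_zero {b r : ℝ} (hb : 0 ≤ b) :
    (if 0 ≤ r then b else 0) * r = max (b * r) 0 := by
  split_ifs with hr
  · exact (max_eq_left (mul_nonneg hb hr)).symm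
  · rw [zero_mul, max_eq_right (mul_nonpos_of_nonneg_of_nonpos hb (not_le.mp hr).le)]

section

variable {d : ℕ} (ℓ : Fin (d + 1) → Fin (d + 1) → ℝ)

theorem pbar_pos (hℓnn : ∀ i j, 0 ≤ ℓ i j) (hto0 : ∀ i : Fin d, 0 < ℓ i.succ 0) (i : Fin d) :
    0 < pbar ℓ i :=
  Finset.sum_pos' (fun j _ => hℓnn i.succ j) ⟨0, Finset.mem_univ 0, hto0 i⟩

theorem sum_rel_eq_one {i : Fin d} (hi : pbar ℓ i ≠ 0) : ∑ j, rel ℓ i j = 1 := by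
  simp only [rel, ← Finset.sum_div]
  exact div_self hi

def unitGain (z : Fin d → ℝ) (i : Fin d) : ℝ :=
  ∑ j, rel ℓ i j * ((Fin.cons (1 : ℝ) z : Fin (d + 1) → ℝ) j - z i)

variable {ℓ}

theorem pbar_mul_unitGain (z : Fin d → ℝ) {i : Fin d} (hi : pbar ℓ i ≠ 0) :
    pbar ℓ i * unitGain ℓ z i =
      ∑ j, ℓ i.succ j * ((Fin.cons (1 : ℝ) z : Fin (d + 1) → ℝ) j - z i) := by
  simp only [unitGain, rel, Finset.mul_sum, ← mul_assoc, mul_div_cancel₀ _ hi]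

theorem unitGain_eq (z : Fin d → ℝ) {i : Fin d} (hi : pbar ℓ i ≠ 0) :
    unitGain ℓ z i = rel ℓ i 0 + ∑ j, rel ℓ i j.succ * z j - z i := by
  have hsum := sum_rel_eq_one ℓ hi
  rw [Fin.sum_univ_succ] at hsum
  simp only [unitGain, mul_sub, Finset.sum_sub_distrib, ← Finset.sum_mul, Fin.sum_univ_succ,
    Fin.cons_zero, Fin.cons_succ, mul_one, hsum, one_mul]

theorem sum_mul_sum_rel_comm (z p : Fin d → ℝ) :
    ∑ i, z i * ∑ j, rel ℓ j i.succ * p j = ∑ j, p j * ∑ i, rel ℓ j i.succ * z i := by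
  simp only [Finset.mul_sum]
  rw [Finset.sum_comm]
  exact Finset.sum_congr rfl fun _ _ => Finset.sum_congr rfl fun _ _ => by ring

theorem obj_sub_sum_mul_slack (z p : Fin d → ℝ) (hpbar : ∀ i, pbar ℓ i ≠ 0) :
    obj ℓ p - ∑ i, z i * (p i - ∑ j, rel ℓ j i.succ * p j) = ∑ i, p i * unitGain ℓ z i := by
  simp only [unitGain_eq z (hpbar _), obj, mul_sub, mul_add, Finset.sum_sub_distrib,
    Finset.sum_add_distrib, sum_mul_sum_rel_comm z p]
  simp only [mul_comm (z _), mul_comm (rel ℓ _ 0)]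
  ring

theorem obj_sub_le_of_feasible (hpbar : ∀ i, 0 < pbar ℓ i) {z x p : Fin d → ℝ}
    (hz : ∀ i, 0 ≤ z i) (hf : Feasible ℓ x p) :
    obj ℓ p - ∑ i, z i * x i ≤ ∑ i, max (pbar ℓ i * unitGain ℓ z i) 0 :=
  calc obj ℓ p - ∑ i, z i * x i
      ≤ obj ℓ p - ∑ i, z i * (p i - ∑ j, rel ℓ j i.succ * p j) :=
        sub_le_sub_left (Finset.sum_le_sum fun i _ =>
          mul_le_mul_of_nonneg_left (by linarith [hf.1 i]) (hz i)) _
    _ = ∑ i, p i * unitGain ℓ z i := obj_sub_sum_mul_slack z p fun i => (hpbar i).ne'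
    _ ≤ ∑ i, max (pbar ℓ i * unitGain ℓ z i) 0 :=
        Finset.sum_le_sum fun i _ => mul_le_max_mul_zero (hf.2 i).1 (hf.2 i).2

theorem exists_feasible_obj_sub_eq (hpbar : ∀ i, 0 < pbar ℓ i) (z : Fin d → ℝ) :
    ∃ x p, Feasible ℓ x p ∧
      obj ℓ p - ∑ i, z i * x i = ∑ i, max (pbar ℓ i * unitGain ℓ z i) 0 := by
  set p : Fin d → ℝ := fun i => if 0 ≤ unitGain ℓ z i then pbar ℓ i else 0
  refine ⟨fun i => p i - ∑ j, rel ℓ j i.succ * p j, p, ⟨fun i => by simp, fun i => ?_⟩, ?_⟩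
  · simp only [p]
    split_ifs <;> simp [(hpbar i).le]
  · rw [obj_sub_sum_mul_slack z p fun i => (hpbar i).ne']
    exact Finset.sum_congr rfl fun i _ => ite_nonneg_mul_eq_max_mul_zero (hpbar i).le

end

theorem eisenbergNoe_conjugate_general
    (d : ℕ) (ℓ : Fin (d + 1) → Fin (d + 1) → ℝ)
    (hℓnn : ∀ i j, 0 ≤ ℓ i j)
    (hto0 : ∀ i : Fin d, 0 < ℓ i.succ 0)
    (z : Fin d → ℝ) (hz : ∀ i, 0 ≤ z i) :
    (⨆ (x : Fin d → ℝ) (p : Fin d → ℝ) (_ : Feasible ℓ x p),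
        ((obj ℓ p - ∑ i, z i * x i : ℝ) : EReal)) =
      ((∑ i, max (∑ j, ℓ i.succ j * ((Fin.cons (1 : ℝ) z : Fin (d + 1) → ℝ) j - z i)) 0 : ℝ) : EReal) := by
  have hpbar := pbar_pos ℓ hℓnn hto0
  simp only [← pbar_mul_unitGain z (hpbar _).ne']
  refine le_antisymm (iSup₂_le fun x p => iSup_le fun hf =>
    EReal.coe_le_coe (obj_sub_le_of_feasible hpbar hz hf)) ?_
  obtain ⟨x, p, hf, hval⟩ := exists_feasible_obj_sub_eq hpbar z
  rw [← hval]
  exact le_iSup₂_of_le x p (le_iSup_of_le hf le_rfl)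

/-- Conjugate function of the Eisenberg–Noe aggregation function:
for `z ∈ ℝ^d_+`, `sup_x (Λ(x) − zᵀx) = ∑ᵢ (cᵢ(z))⁺` with
`cᵢ(z) = ∑_{j=0}^d ℓ_{ij}(zⱼ − zᵢ)` and `z₀ := 1`; here `sup_x (Λ(x) − zᵀx)` is the
supremum of `∑ᵢ a_{i0} pᵢ − zᵀx` over all pairs `(x,p)` feasible for `P(x)`. -/
theorem eisenbergNoe_conjugate
    (d : ℕ) (hd : 1 ≤ d) (ℓ : Fin (d + 1) → Fin (d + 1) → ℝ)
    (hℓnn : ∀ i j, 0 ≤ ℓ i j)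
    (hsoc : ∀ i : Fin d, ℓ 0 i.succ = 0)
    (hto0 : ∀ i : Fin d, 0 < ℓ i.succ 0)
    (hself : ∀ i, ℓ i i = 0)
    (z : Fin d → ℝ) (hz : ∀ i, 0 ≤ z i) :
    (⨆ (x : Fin d → ℝ) (p : Fin d → ℝ) (_ : Feasible ℓ x p),
        ((obj ℓ p - ∑ i, z i * x i : ℝ) : EReal)) =
      ((∑ i, max (∑ j, ℓ i.succ j * ((Fin.cons (1 : ℝ) z : Fin (d + 1) → ℝ) j - z i)) 0 : ℝ) : EReal) :=
  eisenbergNoe_conjugate_general d ℓ hℓnn hto0 z hz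

end EisenbergNoe
end
end

section
/- Conjugate function of the network flow aggregation function: for every z = (z_{(a,b)})_{(a,b)∈E} ∈ ℝ^E_+, sup { Σ_{p∈P} u_p − Σ_{(a,b)∈E} z_{(a,b)} x_{(a,b)} : x ∈ ℝ^E, u ∈ ℝ^P, Σ_{p∈P : (a,b)∈p} u_p ≤ x_{(a,b)} for every (a,b) ∈ E } equals 0 if Σ_{(a,b)∈p} z_{(a,b)} = 1 for every p ∈ P, and equals +∞ otherwise. Equivalently, with Λ(x) := sup{ Σ_{p∈P} u_p : u ∈ ℝ^P, Σ_{p∈P : (a,b)∈p} u_p ≤ x_{(a,b)} for all (a,b) ∈ E }, one has sup_{x ∈ ℝ^E}( Λ(x) − zᵀx ) = 0 if every path p ∈ P satisfies Σ_{(a,b)∈p} z_{(a,b)} = 1, and +∞ otherwise. -/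
/-!
Weak duality bounds the conjugate from above: if every path has `z`-length `1`, the value
`∑_p u_p` of a feasible flow equals `∑_e z_e · (load of u on e) ≤ zᵀx`, using `z ≥ 0`.
From below, sending `c` units along one path `p` with capacity exactly `c` on its arcs gives
`Λ(x) − zᵀx ≥ (1 − z(p)) c`; `c = 0` gives `0`, and if `z(p) ≠ 1` the bound is unbounded in `c`.
-/

open scoped ENNReal BigOperators

noncomputable section

namespace NetworkFlow

/-- `L` is a simple path from `s` to `t` in the directed network with arc set `E`:
a nonempty list of consecutive arcs of `E` starting at `s`, ending at `t`, and
visiting no node more than once. -/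
def IsSPath {N : Type*} [DecidableEq N] (E : Finset (N × N)) (s t : N)
    (L : List (N × N)) : Prop :=
  L ≠ [] ∧ (∀ e ∈ L, e ∈ E) ∧ L.head?.map Prod.fst = some s ∧
    L.getLast?.map Prod.snd = some t ∧
    L.Chain' (fun e f => e.2 = f.1) ∧ (L.map Prod.fst ++ [t]).Nodup

/-- The network flow aggregation function in path formulation: `Λ(x)` is the optimal
value of `maximize ∑_{p ∈ P} u_p subject to ∑_{p ∈ P, (a,b) ∈ p} u_p ≤ x_{(a,b)}`
for all arcs `(a,b) ∈ E` (with value `⊥ = −∞` if infeasible). The (finite) sums over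
the set `P` of simple paths are expressed with `finsum`. -/
def agg {N : Type*} [DecidableEq N] (E : Finset (N × N)) (s t : N)
    (x : N × N → ℝ) : EReal :=
  ⨆ (u : {L : List (N × N) // IsSPath E s t L} → ℝ)
    (_ : ∀ e ∈ E, (∑ᶠ (q : {L : List (N × N) // IsSPath E s t L}) (_ : e ∈ q.1), u q)
      ≤ x e),
    ((∑ᶠ q : {L : List (N × N) // IsSPath E s t L}, u q : ℝ) : EReal)

theorem _root_.List.finite_setOf_nodup_forall_mem {α : Type*} (S : Finset α) :
    {l : List α | l.Nodup ∧ ∀ a ∈ l, a ∈ S}.Finite := by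
  refine (Set.finite_range fun l : {l : List S // l.Nodup} => l.1.map Subtype.val).subset ?_
  rintro l ⟨hnd, hS⟩
  have hval : (l.attachWith (· ∈ S) hS).map Subtype.val = l := List.attachWith_map_subtype_val hS
  exact ⟨⟨l.attachWith (· ∈ S) hS, (hval ▸ hnd).of_map _⟩, hval⟩

section

variable {N : Type*} [DecidableEq N] {E : Finset (N × N)} {s t : N}

abbrev SPath (E : Finset (N × N)) (s t : N) : Type _ := {L : List (N × N) // IsSPath E s t L}

/-- The conjugate `sup_x (Λ(x) − zᵀx)` of the aggregation function. -/
def aggConjugate (E : Finset (N × N)) (s t : N) (z : N × N → ℝ) : EReal :=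
  ⨆ x : N × N → ℝ, (agg E s t x - ((∑ e ∈ E, z e * x e : ℝ) : EReal))

def pathCapacity (p : List (N × N)) (c : ℝ) (e : N × N) : ℝ := if e ∈ p then c else 0

theorem IsSPath.nodup {L : List (N × N)} (h : IsSPath E s t L) : L.Nodup :=
  (List.nodup_append.mp h.2.2.2.2.2).1.of_map Prod.fst

theorem IsSPath.subset {L : List (N × N)} (h : IsSPath E s t L) : ∀ e ∈ L, e ∈ E := h.2.1

instance : Finite (SPath E s t) :=
  ((List.finite_setOf_nodup_forall_mem E).subset
    fun _ hL => ⟨IsSPath.nodup hL, IsSPath.subset hL⟩).to_subtype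

theorem IsSPath.sum_filter_mem (z : N × N → ℝ) {p : List (N × N)} (hp : IsSPath E s t p) :
    ∑ e ∈ E with e ∈ p, z e = (p.map z).sum := by
  have hfilter : E.filter (· ∈ p) = p.toFinset := by
    ext e
    simp only [Finset.mem_filter, List.mem_toFinset, and_iff_right_iff_imp]
    exact hp.subset e
  rw [hfilter, List.sum_toFinset _ hp.nodup]

theorem IsSPath.sum_mul_pathCapacity (z : N × N → ℝ) {p : List (N × N)} (hp : IsSPath E s t p)
    (c : ℝ) : ∑ e ∈ E, z e * pathCapacity p c e = (p.map z).sum * c := by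
  simp only [pathCapacity, mul_ite, mul_zero]
  rw [← Finset.sum_filter, ← Finset.sum_mul, hp.sum_filter_mem]

/-- The flow sending `c` along the single path `p` is feasible for `pathCapacity p c`. -/
theorem coe_le_agg_pathCapacity (p : SPath E s t) (c : ℝ) :
    (c : EReal) ≤ agg E s t (pathCapacity p.1 c) := by
  have := Fintype.ofFinite (SPath E s t)
  have hfeas : ∀ e ∈ E, (∑ᶠ (q : SPath E s t) (_ : e ∈ q.1), if q = p then c else 0)
      ≤ pathCapacity p.1 c e := by
    intro e _
    rw [finsum_cond_eq_sum_of_cond_iff _ (p := fun q : SPath E s t => e ∈ q.1)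
      (t := {q | e ∈ q.1}) (by simp), Finset.sum_ite_eq']
    simp [pathCapacity]
  have hval : (∑ᶠ q : SPath E s t, if q = p then c else 0) = c := by
    simp [finsum_eq_sum_of_fintype]
  calc (c : EReal) = ((∑ᶠ q : SPath E s t, if q = p then c else 0 : ℝ) : EReal) := by rw [hval]
    _ ≤ _ := le_iSup₂_of_le (fun q => if q = p then c else 0) hfeas le_rfl

theorem le_agg_sub_pathCapacity (z : N × N → ℝ) {p : List (N × N)} (hp : IsSPath E s t p)
    (c : ℝ) : (((1 - (p.map z).sum) * c : ℝ) : EReal) ≤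
      agg E s t (pathCapacity p c) - ((∑ e ∈ E, z e * pathCapacity p c e : ℝ) : EReal) := by
  rw [hp.sum_mul_pathCapacity, sub_mul, one_mul, EReal.coe_sub]
  exact EReal.sub_le_sub (coe_le_agg_pathCapacity ⟨p, hp⟩ c) le_rfl

theorem le_aggConjugate (z : N × N → ℝ) {p : List (N × N)} (hp : IsSPath E s t p) (c : ℝ) :
    (((1 - (p.map z).sum) * c : ℝ) : EReal) ≤ aggConjugate E s t z :=
  le_iSup_of_le (pathCapacity p c) (le_agg_sub_pathCapacity z hp c)

theorem sum_flow_eq_sum_mul_load [Fintype (SPath E s t)] {z : N × N → ℝ}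
    (hpath : ∀ L, IsSPath E s t L → (L.map z).sum = 1) (u : SPath E s t → ℝ) :
    ∑ q, u q = ∑ e ∈ E, z e * ∑ q with e ∈ q.1, u q :=
  calc ∑ q, u q
      = ∑ q : SPath E s t, ∑ e ∈ E, if e ∈ q.1 then z e * u q else 0 := by
        refine Finset.sum_congr rfl fun q _ => ?_
        rw [← Finset.sum_filter, ← Finset.sum_mul, q.2.sum_filter_mem, hpath q.1 q.2, one_mul]
    _ = ∑ e ∈ E, ∑ q : SPath E s t, if e ∈ q.1 then z e * u q else 0 := Finset.sum_comm
    _ = ∑ e ∈ E, z e * ∑ q with e ∈ q.1, u q := by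
        refine Finset.sum_congr rfl fun e _ => ?_
        rw [Finset.mul_sum, ← Finset.sum_filter]

theorem agg_le_of_forall_pathSum_eq_one {z : N × N → ℝ} (hz : ∀ e ∈ E, 0 ≤ z e)
    (hpath : ∀ L, IsSPath E s t L → (L.map z).sum = 1) (x : N × N → ℝ) :
    agg E s t x ≤ ((∑ e ∈ E, z e * x e : ℝ) : EReal) := by
  have := Fintype.ofFinite (SPath E s t)
  refine iSup₂_le fun u hu => EReal.coe_le_coe_iff.2 ?_
  rw [finsum_eq_sum_of_fintype, sum_flow_eq_sum_mul_load hpath]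
  refine Finset.sum_le_sum fun e he => mul_le_mul_of_nonneg_left ?_ (hz e he)
  rw [← finsum_cond_eq_sum_of_cond_iff u (p := fun q : SPath E s t => e ∈ q.1) (by simp)]
  exact hu e he

theorem aggConjugate_nonneg (z : N × N → ℝ) (hP : ∃ L, IsSPath E s t L) :
    0 ≤ aggConjugate E s t z := by
  obtain ⟨L, hL⟩ := hP
  simpa using le_aggConjugate z hL 0

theorem aggConjugate_nonpos {z : N × N → ℝ} (hz : ∀ e ∈ E, 0 ≤ z e)
    (hpath : ∀ L, IsSPath E s t L → (L.map z).sum = 1) : aggConjugate E s t z ≤ 0 :=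
  iSup_le fun x => EReal.sub_nonpos.2 (agg_le_of_forall_pathSum_eq_one hz hpath x)

theorem aggConjugate_eq_top {z : N × N → ℝ} {p : List (N × N)} (hp : IsSPath E s t p)
    (hσ : (p.map z).sum ≠ 1) : aggConjugate E s t z = ⊤ := by
  refine (EReal.eq_top_iff_forall_lt _).2 fun r => ?_
  have hne : 1 - (p.map z).sum ≠ 0 := sub_ne_zero.2 (Ne.symm hσ)
  calc (r : EReal) < ((r + 1 : ℝ) : EReal) := EReal.coe_lt_coe_iff.2 (lt_add_one r)
    _ = (((1 - (p.map z).sum) * ((r + 1) / (1 - (p.map z).sum)) : ℝ) : EReal) := by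
        rw [mul_div_cancel₀ _ hne]
    _ ≤ aggConjugate E s t z := le_aggConjugate z hp _

end

theorem networkFlow_conjugate_general
    {N : Type*} [DecidableEq N] (E : Finset (N × N))
    (s t : N)
    (hP : ∃ L, IsSPath E s t L)
    (z : N × N → ℝ) (hz : ∀ e ∈ E, 0 ≤ z e) :
    ((∀ L, IsSPath E s t L → (L.map z).sum = 1) →
      (⨆ x : N × N → ℝ, (agg E s t x - ((∑ e ∈ E, z e * x e : ℝ) : EReal))) = 0) ∧
    (¬(∀ L, IsSPath E s t L → (L.map z).sum = 1) →
      (⨆ x : N × N → ℝ, (agg E s t x - ((∑ e ∈ E, z e * x e : ℝ) : EReal))) = ⊤) := by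
  refine ⟨fun hpath => ?_, fun hpath => ?_⟩
  · exact le_antisymm (aggConjugate_nonpos hz hpath) (aggConjugate_nonneg z hP)
  · push Not at hpath
    obtain ⟨p, hp, hσ⟩ := hpath
    exact aggConjugate_eq_top hp hσ

/-- Conjugate function of the network flow aggregation function:
for `z ∈ ℝ^E_+`, `sup_x ( Λ(x) − zᵀx )` equals `0` if every simple path `p` from the
source to the sink satisfies `∑_{(a,b) ∈ p} z_{(a,b)} = 1`, and equals `+∞`
otherwise. -/
theorem networkFlow_conjugate
    {N : Type*} [DecidableEq N] (E : Finset (N × N)) (hE : E.Nonempty)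
    (s t : N) (hst : t ≠ s)
    (hP : ∃ L, IsSPath E s t L)
    (z : N × N → ℝ) (hz : ∀ e ∈ E, 0 ≤ z e) :
    ((∀ L, IsSPath E s t L → (L.map z).sum = 1) →
      (⨆ x : N × N → ℝ, (agg E s t x - ((∑ e ∈ E, z e * x e : ℝ) : EReal))) = 0) ∧
    (¬(∀ L, IsSPath E s t L → (L.map z).sum = 1) →
      (⨆ x : N × N → ℝ, (agg E s t x - ((∑ e ∈ E, z e * x e : ℝ) : EReal))) = ⊤) :=
  networkFlow_conjugate_general E s t hP z hz

end NetworkFlow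
end
end
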